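/- arXiv:1104.3034 — 3 statements merged into one kernel-verified Lean document; each statement's English description precedes it below -/
import Mathlib

section
/- Under the zero-drift conditions and with a(1)ã(1)>0, define θ = arccos( -(∑ i j p_{i,j}) / (2√(a(1)ã(1))) ). Then sin(θ)·√(a(1)ã(1)) = √(-d''(1))/(2√2), provided d''(1)<0. -/
/-!
Under zero drift the covariance matrix of one step is `[[2ã(1), ∑ ij p_{ij}], [∑ ij p_{ij}, 2a(1)]]`,
and expanding `d = b² - 4ac` shows that `-d''(1)/2` is exactly its determinant
`4 a(1) ã(1) - (∑ ij p_{ij})²`. Since `cos θ = -(∑ ij p_{ij}) / (2√(a(1)ã(1)))`, that determinant is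
`4 a(1) ã(1) sin² θ`.
-/

open Real Polynomial

theorem Polynomial.iteratedDeriv_eval {𝕜 : Type*} [NontriviallyNormedField 𝕜] (p : 𝕜[X])
    (n : ℕ) : iteratedDeriv n (fun x => p.eval x) = fun x => (derivative^[n] p).eval x := by
  induction n with
  | zero => simp
  | succ n ih =>
    rw [iteratedDeriv_succ, ih, Function.iterate_succ_apply']
    funext x
    exact Polynomial.deriv _

theorem Real.sin_arccos_div_sqrt_mul_sqrt (x s : ℝ) :
    sin (arccos (x / √s)) * √s = √(s - x ^ 2) := by
  rcases le_or_gt s 0 with hs | hs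
  · rw [sqrt_eq_zero'.mpr hs, sqrt_eq_zero'.mpr (by nlinarith [sq_nonneg x]), mul_zero]
  · rw [sin_arccos, ← sqrt_mul' _ hs.le, div_pow, sq_sqrt hs.le]
    congr 1
    field_simp

theorem iteratedDeriv_two_discrim_of_quadratics (p11 p10 p1m1 p01 p0m1 pm11 pm10 pm1m1 : ℝ)
    (a b c d : ℝ → ℝ)
    (ha : ∀ x, a x = p11*x^2 + p01*x + pm11)
    (hb : ∀ x, b x = p10*x^2 - x + pm10)
    (hc : ∀ x, c x = p1m1*x^2 + p0m1*x + pm1m1)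
    (hd : ∀ x, d x = (b x)^2 - 4*(a x)*(c x)) (x : ℝ) :
    iteratedDeriv 2 d x = 2 * (2*p10*x - 1)^2 + 2 * b x * (2*p10)
      - 4 * (2*p11 * c x + 2 * (2*p11*x + p01) * (2*p1m1*x + p0m1) + a x * (2*p1m1)) := by
  have hd_eval : d = fun x => ((C p10 * X^2 - X + C pm10)^2
      - 4 * (C p11 * X^2 + C p01 * X + C pm11) * (C p1m1 * X^2 + C p0m1 * X + C pm1m1)).eval x := by
    funext x
    simp [hd, ha, hb, hc]
  rw [hd_eval, Polynomial.iteratedDeriv_eval, ha, hb, hc]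
  simp only [iterate_map_sub, Function.iterate_succ, Function.iterate_zero, id_eq,
    Function.comp_apply, derivative_pow, Nat.cast_ofNat, Nat.add_one_sub_one, pow_one,
    derivative_add, derivative_sub, derivative_mul, derivative_C, zero_mul, derivative_X, mul_one,
    zero_add, add_zero, derivative_one, sub_zero, derivative_ofNat, eval_sub, eval_add, eval_mul,
    eval_C, eval_X, eval_one, eval_pow, eval_ofNat]
  ring

theorem quarter_covariance_det_eq_of_zero_drift (p11 p10 p1m1 p01 p0m1 pm11 pm10 pm1m1 : ℝ)
    (hsum : p11 + p10 + p1m1 + p01 + p0m1 + pm11 + pm10 + pm1m1 = 1)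
    (hdriftx : (p11 + p10 + p1m1) - (pm11 + pm10 + pm1m1) = 0)
    (hdrifty : (p11 + p01 + pm11) - (p1m1 + p0m1 + pm1m1) = 0) :
    (p11 + p01 + pm11) * (p11 + p10 + p1m1) - (-(p11 - p1m1 - pm11 + pm1m1) / 2) ^ 2
      = -(2 * (2*p10 - 1)^2 + 2 * (p10 - 1 + pm10) * (2*p10)
        - 4 * (2*p11 * (p1m1 + p0m1 + pm1m1) + 2 * (2*p11 + p01) * (2*p1m1 + p0m1)
          + (p11 + p01 + pm11) * (2*p1m1))) / 8 := by
  obtain rfl : p0m1 = p11 + p01 + pm11 - p1m1 - pm1m1 := by linarith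
  obtain rfl : pm10 = p11 + p10 + p1m1 - pm11 - pm1m1 := by linarith
  obtain rfl : pm1m1 = 3*p11 + 2*p10 + p1m1 + 2*p01 + pm11 - 1 := by linarith
  ring

theorem stmt4_general (p11 p10 p1m1 p01 p0m1 pm11 pm10 pm1m1 : ℝ)
    (hsum : p11 + p10 + p1m1 + p01 + p0m1 + pm11 + pm10 + pm1m1 = 1)
    (hdriftx : (p11 + p10 + p1m1) - (pm11 + pm10 + pm1m1) = 0)
    (hdrifty : (p11 + p01 + pm11) - (p1m1 + p0m1 + pm1m1) = 0)
    (a b c d : ℝ → ℝ)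
    (ha : ∀ x, a x = p11*x^2 + p01*x + pm11)
    (hb : ∀ x, b x = p10*x^2 - x + pm10)
    (hc : ∀ x, c x = p1m1*x^2 + p0m1*x + pm1m1)
    (hd : ∀ x, d x = (b x)^2 - 4*(a x)*(c x))
    (θ : ℝ)
    (hθ : θ = Real.arccos (-(p11 - p1m1 - pm11 + pm1m1) /
      (2 * Real.sqrt (a 1 * (p11 + p10 + p1m1))))) :
    Real.sin θ * Real.sqrt (a 1 * (p11 + p10 + p1m1))
      = Real.sqrt (-(iteratedDeriv 2 d 1)) / (2 * Real.sqrt 2) := by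
  have hdet : a 1 * (p11 + p10 + p1m1) - (-(p11 - p1m1 - pm11 + pm1m1) / 2) ^ 2
      = -iteratedDeriv 2 d 1 / (2 * √2) ^ 2 := by
    rw [iteratedDeriv_two_discrim_of_quadratics _ _ _ _ _ _ _ _ a b c d ha hb hc hd, ha, hb, hc,
      mul_pow, sq_sqrt zero_le_two]
    linear_combination quarter_covariance_det_eq_of_zero_drift _ _ _ _ _ _ _ _ hsum hdriftx hdrifty
  rw [hθ, ← div_div, sin_arccos_div_sqrt_mul_sqrt, hdet,
    sqrt_div' _ (sq_nonneg _), sqrt_sq (by positivity)]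

theorem stmt4 (p11 p10 p1m1 p01 p0m1 pm11 pm10 pm1m1 : ℝ)
    (hnn : 0 ≤ p11 ∧ 0 ≤ p10 ∧ 0 ≤ p1m1 ∧ 0 ≤ p01 ∧ 0 ≤ p0m1 ∧ 0 ≤ pm11 ∧ 0 ≤ pm10 ∧ 0 ≤ pm1m1)
    (hsum : p11 + p10 + p1m1 + p01 + p0m1 + pm11 + pm10 + pm1m1 = 1)
    (hdriftx : (p11 + p10 + p1m1) - (pm11 + pm10 + pm1m1) = 0)
    (hdrifty : (p11 + p01 + pm11) - (p1m1 + p0m1 + pm1m1) = 0)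
    (a b c d : ℝ → ℝ)
    (ha : ∀ x, a x = p11*x^2 + p01*x + pm11)
    (hb : ∀ x, b x = p10*x^2 - x + pm10)
    (hc : ∀ x, c x = p1m1*x^2 + p0m1*x + pm1m1)
    (hd : ∀ x, d x = (b x)^2 - 4*(a x)*(c x))
    (hpos : 0 < a 1 * (p11 + p10 + p1m1))
    (hdneg : iteratedDeriv 2 d 1 < 0)
    (θ : ℝ)
    (hθ : θ = Real.arccos (-(p11 - p1m1 - pm11 + pm1m1) /
      (2 * Real.sqrt (a 1 * (p11 + p10 + p1m1))))) :
    Real.sin θ * Real.sqrt (a 1 * (p11 + p10 + p1m1))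
      = Real.sqrt (-(iteratedDeriv 2 d 1)) / (2 * Real.sqrt 2) :=
  stmt4_general p11 p10 p1m1 p01 p0m1 pm11 pm10 pm1m1 hsum hdriftx hdrifty a b c d ha hb hc hd θ hθ
end

section
/- For integers i₀ ≥ 1, real x₁ ∈ (-1,1) and real p ≥ 0, the integral ∫_{x₁}^{1} t^{i₀} (1-t)^p dt equals p!/i₀^{1+p} + O(i₀^{-2-p}) as i₀ → ∞. In particular for p=0 it equals 1/i₀ + O(1/i₀²). -/
/-!
Split the integral at `0`. On `[x₁, 0]` the integrand is bounded by a constant times `|x₁| ^ n`,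
which decays faster than any power of `n`. On `[0, 1]` the integral is the Beta value
`Γ(n+1) Γ(p+1) / Γ(n+1+q)` with `q = p + 1`. Comparing slopes of the convex function `log ∘ Γ`
over `[n, n+1]`, `[n+1, n+1+q]` and `[n+1+q, n+2+q]` traps `Γ(n+1) / Γ(n+1+q)` between
`(n+1+q)^(-q)` and `n^(-q)`, and by Bernoulli's inequality these two differ by `O(n^(-q-1))`.
-/

open Filter Asymptotics

namespace Real

theorem Gamma_mul_rpow_le_Gamma_add {y q : ℝ} (hy : 1 < y) (hq : 0 < q) :
    Gamma y * (y - 1) ^ q ≤ Gamma (y + q) := by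
  have hy1 : 0 < y - 1 := by linarith
  have hslope := convexOn_log_Gamma.slope_mono_adjacent (x := y - 1) (y := y) (z := y + q)
    (Set.mem_Ioi.2 hy1) (Set.mem_Ioi.2 (by linarith)) (by linarith) (by linarith)
  have hrec : Gamma y = (y - 1) * Gamma (y - 1) := by
    simpa using Gamma_add_one hy1.ne'
  have hG := Gamma_pos_of_pos hy1
  simp only [Function.comp, sub_sub_cancel, div_one, add_sub_cancel_left] at hslope
  rw [hrec, log_mul hy1.ne' hG.ne', add_sub_cancel_right, le_div_iff₀ hq] at hslope
  rw [← log_le_log_iff (by positivity) (Gamma_pos_of_pos (by linarith)),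
    log_mul (by positivity) (by positivity), log_rpow hy1, hrec, log_mul hy1.ne' hG.ne']
  linarith

theorem Gamma_add_le_Gamma_mul_rpow {y q : ℝ} (hy : 0 < y) (hq : 0 < q) :
    Gamma (y + q) ≤ Gamma y * (y + q) ^ q := by
  have hyq : 0 < y + q := by linarith
  have hslope := convexOn_log_Gamma.slope_mono_adjacent (x := y) (y := y + q) (z := y + q + 1)
    (Set.mem_Ioi.2 hy) (Set.mem_Ioi.2 (by linarith)) (by linarith) (by linarith)
  simp only [Function.comp, add_sub_cancel_left, div_one, Gamma_add_one hyq.ne'] at hslope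
  rw [log_mul hyq.ne' (Gamma_pos_of_pos hyq).ne', add_sub_cancel_right, div_le_iff₀ hq] at hslope
  rw [← log_le_log_iff (Gamma_pos_of_pos hyq) (by positivity),
    log_mul (Gamma_pos_of_pos hy).ne' (by positivity), log_rpow hyq]
  linarith

theorem inv_rpow_sub_inv_rpow_add_le {x a q : ℝ} (hx : 0 < x) (ha : 0 ≤ a) (hq : 1 ≤ q) :
    (x ^ q)⁻¹ - ((x + a) ^ q)⁻¹ ≤ q * a * (x ^ (q + 1))⁻¹ := by
  have hxa : 0 < x + a := by linarith
  have hbern := one_add_mul_self_le_rpow_one_add (s := -(a / (x + a)))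
    (by rw [neg_le_neg_iff, div_le_one hxa]; linarith) hq
  have hratio : 1 + -(a / (x + a)) = x / (x + a) := by field_simp; ring
  rw [hratio, div_rpow hx.le hxa.le, le_div_iff₀ (by positivity)] at hbern
  have hxa_le : x * (a / (x + a)) ≤ a := by
    rw [mul_div_assoc', div_le_iff₀ hxa]; nlinarith
  have hxq := rpow_pos_of_pos hx q
  have hxaq := rpow_pos_of_pos hxa q
  rw [rpow_add_one hx.ne', mul_inv, ← sub_nonneg]
  field_simp
  nlinarith [mul_le_mul_of_nonneg_left hxa_le (by positivity : (0:ℝ) ≤ q * (x + a) ^ q)]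

theorem abs_Gamma_div_Gamma_add_sub_inv_rpow_le {x q : ℝ} (hx : 0 < x) (hq : 1 ≤ q) :
    |Gamma (x + 1) / Gamma (x + 1 + q) - (x ^ q)⁻¹| ≤ q * (1 + q) * (x ^ (q + 1))⁻¹ := by
  have hGq := Gamma_pos_of_pos (by linarith : 0 < x + 1 + q)
  have hlower := Gamma_mul_rpow_le_Gamma_add (by linarith : 1 < x + 1) (by linarith : 0 < q)
  have hupper := Gamma_add_le_Gamma_mul_rpow (by linarith : 0 < x + 1) (by linarith : 0 < q)
  rw [add_sub_cancel_right] at hlower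
  have hle : Gamma (x + 1) / Gamma (x + 1 + q) ≤ (x ^ q)⁻¹ := by
    rw [div_le_iff₀ hGq, ← div_eq_inv_mul, le_div_iff₀ (by positivity)]
    exact hlower
  have hge : ((x + (1 + q)) ^ q)⁻¹ ≤ Gamma (x + 1) / Gamma (x + 1 + q) := by
    rw [le_div_iff₀ hGq, ← div_eq_inv_mul, div_le_iff₀ (by positivity), ← add_assoc]
    linarith
  rw [abs_sub_comm, abs_of_nonneg (sub_nonneg.2 hle)]
  linarith [inv_rpow_sub_inv_rpow_add_le hx (by linarith : 0 ≤ 1 + q) hq]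

end Real

theorem integral_pow_mul_one_sub_rpow_eq_Gamma (n : ℕ) {p : ℝ} (hp : -1 < p) :
    ∫ t in (0:ℝ)..1, t ^ n * (1 - t) ^ p
      = Real.Gamma (n + 1) * Real.Gamma (p + 1) / Real.Gamma (n + 1 + (p + 1)) := by
  have hn : 0 < (n:ℝ) + 1 := by positivity
  have hp1 : 0 < p + 1 := by linarith
  have hbeta := Complex.Gamma_mul_Gamma_eq_betaIntegral (s := ((n + 1 : ℝ) : ℂ))
    (t := ((p + 1 : ℝ) : ℂ)) (by simpa using hn) (by simpa using hp1)
  have hB : Complex.betaIntegral ((n + 1 : ℝ) : ℂ) ((p + 1 : ℝ) : ℂ)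
      = ((∫ t in (0:ℝ)..1, t ^ n * (1 - t) ^ p : ℝ) : ℂ) := by
    rw [← intervalIntegral.integral_ofReal, Complex.betaIntegral]
    refine intervalIntegral.integral_congr fun t ht => ?_
    have ht1 : 0 ≤ 1 - t := by
      rw [Set.uIcc_of_le zero_le_one] at ht
      linarith [ht.2]
    have hsub : (1:ℂ) - t = ((1 - t : ℝ) : ℂ) := by push_cast; ring
    simp only [Complex.ofReal_add, Complex.ofReal_one, Complex.ofReal_natCast, add_sub_cancel_right,
      Complex.cpow_natCast, hsub, ← Complex.ofReal_cpow ht1]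
    push_cast
    ring
  rw [hB, ← Complex.ofReal_add, Complex.Gamma_ofReal, Complex.Gamma_ofReal, Complex.Gamma_ofReal,
    ← Complex.ofReal_mul, ← Complex.ofReal_mul, Complex.ofReal_inj] at hbeta
  rw [eq_div_iff (Real.Gamma_pos_of_pos (by positivity)).ne', hbeta, mul_comm]

theorem isBigO_integral_pow_mul_one_sub_rpow_sub_Gamma {p : ℝ} (hp : 0 ≤ p) :
    (fun n : ℕ => (∫ t in (0:ℝ)..1, t ^ n * (1 - t) ^ p) - Real.Gamma (p + 1) / (n:ℝ) ^ (1 + p))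
      =O[atTop] fun n : ℕ => (n:ℝ) ^ (-(2 + p)) := by
  have hP := Real.Gamma_pos_of_pos (by linarith : 0 < 1 + p)
  refine IsBigO.of_bound (Real.Gamma (1 + p) * ((1 + p) * (2 + p))) ?_
  filter_upwards [eventually_gt_atTop 0] with n hn
  have hx : (0:ℝ) < n := Nat.cast_pos.2 hn
  have hratio := Real.abs_Gamma_div_Gamma_add_sub_inv_rpow_le hx (by linarith : 1 ≤ 1 + p)
  rw [show (1:ℝ) + (1 + p) = 2 + p by ring, show 1 + p + 1 = 2 + p by ring] at hratio
  rw [integral_pow_mul_one_sub_rpow_eq_Gamma n (by linarith), Real.norm_eq_abs, Real.norm_eq_abs,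
    abs_of_nonneg (Real.rpow_nonneg hx.le _), Real.rpow_neg hx.le, add_comm p 1]
  calc |Real.Gamma (n + 1) * Real.Gamma (1 + p) / Real.Gamma (n + 1 + (1 + p))
        - Real.Gamma (1 + p) / (n:ℝ) ^ (1 + p)|
      = |Real.Gamma (1 + p)
          * (Real.Gamma (n + 1) / Real.Gamma (n + 1 + (1 + p)) - ((n:ℝ) ^ (1 + p))⁻¹)| := by
        congr 1; ring
    _ = Real.Gamma (1 + p)
          * |Real.Gamma (n + 1) / Real.Gamma (n + 1 + (1 + p)) - ((n:ℝ) ^ (1 + p))⁻¹| := by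
        rw [abs_mul, abs_of_pos hP]
    _ ≤ _ := by
        rw [mul_assoc]
        exact mul_le_mul_of_nonneg_left hratio hP.le

theorem isBigO_pow_natCast_rpow_of_lt_one {r : ℝ} (hr0 : 0 ≤ r) (hr1 : r < 1) (a : ℝ) :
    (fun n : ℕ => r ^ n) =O[atTop] fun n : ℕ => (n:ℝ) ^ a := by
  obtain ⟨k, hk⟩ := exists_nat_ge (-a)
  refine IsBigO.of_bound 1 ?_
  filter_upwards [(tendsto_pow_const_mul_const_pow_of_lt_one k hr0 hr1).eventually_lt_const one_pos,
    eventually_ge_atTop 1] with n hlt hn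
  have hx : (1:ℝ) ≤ n := Nat.one_le_cast.2 hn
  rw [one_mul, Real.norm_eq_abs, Real.norm_eq_abs, abs_of_nonneg (pow_nonneg hr0 n),
    abs_of_nonneg (Real.rpow_nonneg (by linarith) a)]
  calc r ^ n ≤ ((n:ℝ) ^ k)⁻¹ := by
        rw [← one_div, le_div_iff₀ (by positivity), mul_comm]
        exact hlt.le
    _ = (n:ℝ) ^ (-(k:ℝ)) := by rw [Real.rpow_neg (by linarith), Real.rpow_natCast]
    _ ≤ (n:ℝ) ^ a := Real.rpow_le_rpow_of_exponent_le hx (by linarith)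

theorem isBigO_integral_pow_mul_one_sub_rpow_abs_pow (x : ℝ) {p : ℝ} (hp : 0 ≤ p) :
    (fun n : ℕ => ∫ t in x..0, t ^ n * (1 - t) ^ p) =O[atTop] fun n => |x| ^ n := by
  refine IsBigO.of_bound ((1 + |x|) ^ p * |x|) (Eventually.of_forall fun n => ?_)
  have hbound : ∀ t ∈ Set.uIoc x 0, ‖t ^ n * (1 - t) ^ p‖ ≤ |x| ^ n * (1 + |x|) ^ p := by
    intro t ht
    have htx : |t| ≤ |x| := by
      rcases Set.mem_uIoc.1 ht with ⟨h1, h2⟩ | ⟨h1, h2⟩ <;> rw [abs_le] <;> constructor <;>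
        linarith [neg_abs_le x, le_abs_self x]
    rw [norm_mul, norm_pow, Real.norm_eq_abs, Real.norm_eq_abs]
    gcongr
    calc |(1 - t) ^ p| ≤ |1 - t| ^ p := Real.abs_rpow_le_abs_rpow _ _
      _ ≤ (1 + |x|) ^ p := by
          gcongr
          linarith [abs_sub (1:ℝ) t, abs_one (α := ℝ)]
  calc ‖∫ t in x..0, t ^ n * (1 - t) ^ p‖ ≤ |x| ^ n * (1 + |x|) ^ p * |0 - x| :=
        intervalIntegral.norm_integral_le_of_norm_le_const hbound
    _ = (1 + |x|) ^ p * |x| * ‖|x| ^ n‖ := by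
        rw [zero_sub, abs_neg, norm_pow, Real.norm_eq_abs, abs_abs]; ring

theorem stmt6 (x1 : ℝ) (hx1 : x1 ∈ Set.Ioo (-1:ℝ) 1) (p : ℝ) (hp : 0 ≤ p) :
    (fun i0 : ℕ => (∫ t in x1..1, t^i0 * (1-t)^p) - Real.Gamma (p+1) / (i0:ℝ)^(1+p))
      =O[atTop] fun i0 : ℕ => (i0:ℝ)^(-(2+p)) := by
  have hcont (n : ℕ) : Continuous fun t : ℝ => t ^ n * (1 - t) ^ p :=
    (continuous_pow n).mul ((continuous_const.sub continuous_id).rpow_const fun _ => Or.inr hp)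
  have hsplit : (fun n : ℕ => (∫ t in x1..1, t ^ n * (1 - t) ^ p)
        - Real.Gamma (p + 1) / (n:ℝ) ^ (1 + p))
      = fun n : ℕ => (∫ t in x1..0, t ^ n * (1 - t) ^ p)
        + ((∫ t in (0:ℝ)..1, t ^ n * (1 - t) ^ p) - Real.Gamma (p + 1) / (n:ℝ) ^ (1 + p)) := by
    funext n
    rw [← intervalIntegral.integral_add_adjacent_intervals ((hcont n).intervalIntegrable x1 0)
      ((hcont n).intervalIntegrable 0 1)]
    ring
  have htail := (isBigO_integral_pow_mul_one_sub_rpow_abs_pow x1 hp).trans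
    (isBigO_pow_natCast_rpow_of_lt_one (abs_nonneg x1) (abs_lt.2 hx1) (-(2 + p)))
  rw [hsplit]
  exact htail.add (isBigO_integral_pow_mul_one_sub_rpow_sub_Gamma hp)
end

section
/- Let p ≥ 0 be an integer and x₁ ∈ (-1,1). Then ∫_{x₁}^{1} t^{i₀}(t-1)^p dt = (-1)^p p!/i₀^{1+p} + O(i₀^{-2-p}) as i₀ → ∞; more precisely, lim_{i₀→∞} i₀^{1+p} ∫_{x₁}^{1} t^{i₀}(t-1)^p dt = (-1)^p p!. -/
/-! Integrating by parts on `[0, 1]`, where both boundary terms vanish, gives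
`(i + 1) J(i, p + 1) = -(p + 1) J(i + 1, p)` for `J(i, p) = ∫₀¹ tⁱ (t - 1)ᵖ`, hence the exact value
`J(i, p) = (-1)ᵖ p! / ((i + 1) ⋯ (i + p + 1))`. The remaining piece `∫₀^{x₁}` is `O(|x₁|ⁱ)`,
negligible against every power of `i`, and `1 / ((i + 1) ⋯ (i + p + 1)) = i^{-p-1} (1 + O(1/i))`
by the Weierstrass product inequality `∏ (1 - aₖ) ≥ 1 - ∑ aₖ`. -/

open Filter Asymptotics Finset intervalIntegral Topology
open scoped Interval
open MeasureTheory (volume)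

theorem Finset.one_sub_sum_le_prod_one_sub {ι R : Type*} [CommRing R] [LinearOrder R]
    [IsStrictOrderedRing R] (s : Finset ι) {a : ι → R} (h0 : ∀ i ∈ s, 0 ≤ a i)
    (h1 : ∀ i ∈ s, a i ≤ 1) : 1 - ∑ i ∈ s, a i ≤ ∏ i ∈ s, (1 - a i) := by
  classical
  induction s using Finset.induction_on with
  | empty => simp
  | insert j s hj ih =>
    rw [sum_insert hj, prod_insert hj]
    have ih := ih (fun i hi => h0 i (mem_insert_of_mem hi))
      (fun i hi => h1 i (mem_insert_of_mem hi))
    have hS : 0 ≤ ∑ i ∈ s, a i := sum_nonneg fun i hi => h0 i (mem_insert_of_mem hi)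
    have haj : 0 ≤ 1 - a j := sub_nonneg.2 (h1 j (mem_insert_self j s))
    nlinarith [mul_le_mul_of_nonneg_left ih haj, h0 j (mem_insert_self j s)]

theorem abs_inv_prod_sub_inv_pow_le (n : ℕ) {x : ℝ} (hx : 0 < x) :
    |(∏ k ∈ range n, (x + k + 1))⁻¹ - (x ^ n)⁻¹|
      ≤ (∑ k ∈ range n, ((k : ℝ) + 1)) / x ^ (n + 1) := by
  set a : ℕ → ℝ := fun k => (k + 1) / (x + k + 1)
  have ha0 : ∀ k ∈ range n, 0 ≤ a k := fun k _ => by positivity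
  have ha1 : ∀ k ∈ range n, a k ≤ 1 := fun k _ => (div_le_one (by positivity)).2 (by linarith)
  have hprod : (∏ k ∈ range n, (x + k + 1))⁻¹ = (x ^ n)⁻¹ * ∏ k ∈ range n, (1 - a k) := by
    have hq : ∀ k ∈ range n, 1 - a k = x / (x + k + 1) := fun k _ => by
      simp only [a]; field_simp; ring
    rw [prod_congr rfl hq, prod_div_distrib, prod_const, card_range]
    field_simp
  have hsum : ∑ k ∈ range n, a k ≤ (∑ k ∈ range n, ((k : ℝ) + 1)) / x := by
    rw [sum_div]
    exact sum_le_sum fun k _ => div_le_div_of_nonneg_left (by positivity) hx (by linarith)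
  have hle : ∏ k ∈ range n, (1 - a k) ≤ 1 :=
    prod_le_one (fun k hk => sub_nonneg.2 (ha1 k hk)) fun k hk => by linarith [ha0 k hk]
  have hge := one_sub_sum_le_prod_one_sub (range n) ha0 ha1
  rw [hprod, abs_sub_comm, ← mul_one_sub,
    abs_of_nonneg (mul_nonneg (by positivity) (sub_nonneg.2 hle))]
  calc (x ^ n)⁻¹ * (1 - ∏ k ∈ range n, (1 - a k))
      ≤ (x ^ n)⁻¹ * ((∑ k ∈ range n, ((k : ℝ) + 1)) / x) := by gcongr; linarith
    _ = _ := by rw [pow_succ]; field_simp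

theorem isBigO_inv_prod_sub_inv_pow (n : ℕ) :
    (fun i : ℕ => (∏ k ∈ range n, ((i : ℝ) + k + 1))⁻¹ - ((i : ℝ) ^ n)⁻¹)
      =O[atTop] fun i => ((i : ℝ) ^ (n + 1))⁻¹ := by
  refine IsBigO.of_bound (∑ k ∈ range n, ((k : ℝ) + 1)) ?_
  filter_upwards [eventually_gt_atTop 0] with i hi
  rw [Real.norm_eq_abs, norm_inv, norm_pow, Real.norm_natCast, ← div_eq_mul_inv]
  exact abs_inv_prod_sub_inv_pow_le n (Nat.cast_pos.2 hi)

theorem isBigO_pow_inv_pow_of_abs_lt_one (k : ℕ) {r : ℝ} (hr : |r| < 1) :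
    (fun n : ℕ => r ^ n) =O[atTop] fun n => ((n : ℝ) ^ k)⁻¹ := by
  have h := ((tendsto_pow_const_mul_const_pow_of_abs_lt_one k hr).isBigO_one ℝ).mul
    (isBigO_refl (fun n : ℕ => ((n : ℝ) ^ k)⁻¹) atTop)
  refine h.congr' ?_ (Eventually.of_forall fun n => one_mul _)
  filter_upwards [eventually_ne_atTop 0] with n hn
  field_simp

theorem tendsto_pow_mul_of_isBigO_sub_div_pow {f : ℕ → ℝ} {c : ℝ} (q : ℕ)
    (h : (fun i : ℕ => f i - c / (i : ℝ) ^ q) =O[atTop] fun i : ℕ => ((i : ℝ) ^ (q + 1))⁻¹) :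
    Tendsto (fun i : ℕ => (i : ℝ) ^ q * f i) atTop (𝓝 c) := by
  have hpos : ∀ᶠ i : ℕ in atTop, (i : ℝ) ≠ 0 :=
    (eventually_ne_atTop 0).mono fun i hi => Nat.cast_ne_zero.2 hi
  have hmul : (fun i : ℕ => (i : ℝ) ^ q * f i - c) =O[atTop] fun i : ℕ => (i : ℝ)⁻¹ := by
    refine ((isBigO_refl (fun i : ℕ => (i : ℝ) ^ q) atTop).mul h).congr' ?_ ?_
    · filter_upwards [hpos] with i hi
      field_simp
    · filter_upwards [hpos] with i hi
      field_simp
      ring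
  exact tendsto_sub_nhds_zero_iff.1 (hmul.trans_tendsto tendsto_inv_atTop_nhds_zero_nat)

theorem integral_pow_mul_sub_one_pow_succ (i p : ℕ) :
    ((i : ℝ) + 1) * ∫ t in (0 : ℝ)..1, t ^ i * (t - 1) ^ (p + 1)
      = -((p + 1) * ∫ t in (0 : ℝ)..1, t ^ (i + 1) * (t - 1) ^ p) := by
  have hu : ∀ t ∈ Set.uIcc (0 : ℝ) 1,
      HasDerivAt (fun t => (t - 1) ^ (p + 1)) ((p + 1) * (t - 1) ^ p) t := fun t _ => by
    simpa using ((hasDerivAt_id t).sub_const 1).fun_pow (p + 1)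
  have hv : ∀ t ∈ Set.uIcc (0 : ℝ) 1, HasDerivAt (fun t => t ^ (i + 1)) ((i + 1) * t ^ i) t :=
    fun t _ => by simpa using hasDerivAt_pow (i + 1) t
  have hparts := integral_mul_deriv_eq_deriv_mul hu hv
    ((by fun_prop : Continuous fun t : ℝ => ((p : ℝ) + 1) * (t - 1) ^ p).intervalIntegrable _ _)
    ((by fun_prop : Continuous fun t : ℝ => ((i : ℝ) + 1) * t ^ i).intervalIntegrable _ _)
  calc ((i : ℝ) + 1) * ∫ t in (0 : ℝ)..1, t ^ i * (t - 1) ^ (p + 1)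
      = ∫ t in (0 : ℝ)..1, (t - 1) ^ (p + 1) * ((i + 1) * t ^ i) := by
        rw [← integral_const_mul]; congr 1; ext t; ring
    _ = -∫ t in (0 : ℝ)..1, (p + 1) * (t - 1) ^ p * t ^ (i + 1) := by
        rw [hparts]; simp
    _ = _ := by rw [← integral_const_mul]; congr 2; ext t; ring

theorem integral_zero_one_pow_mul_sub_one_pow (i p : ℕ) :
    ∫ t in (0 : ℝ)..1, t ^ i * (t - 1) ^ p
      = (-1) ^ p * p.factorial / ∏ k ∈ range (p + 1), ((i : ℝ) + k + 1) := by
  induction p generalizing i with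
  | zero => simp [integral_pow]
  | succ p ih =>
    have hi : (i : ℝ) + 1 ≠ 0 := by positivity
    have hprod : ∏ k ∈ range (p + 1 + 1), ((i : ℝ) + k + 1)
        = (∏ k ∈ range (p + 1), (((i + 1 : ℕ) : ℝ) + k + 1)) * (i + 1) := by
      rw [prod_range_succ' _ (p + 1)]
      push_cast
      congr 1
      · exact prod_congr rfl fun k _ => by ring
      · ring
    rw [← mul_right_inj' hi, integral_pow_mul_sub_one_pow_succ, ih, hprod, Nat.factorial_succ]
    push_cast
    field_simp
    ring

theorem integral_pow_mul_sub_one_pow_eq (x : ℝ) (i p : ℕ) :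
    ∫ t in x..1, t ^ i * (t - 1) ^ p
      = (-1) ^ p * p.factorial / ∏ k ∈ range (p + 1), ((i : ℝ) + k + 1)
        - ∫ t in (0 : ℝ)..x, t ^ i * (t - 1) ^ p := by
  have hint : ∀ a b : ℝ, IntervalIntegrable (fun t : ℝ => t ^ i * (t - 1) ^ p) volume a b :=
    fun a b => (by fun_prop : Continuous fun t : ℝ => t ^ i * (t - 1) ^ p).intervalIntegrable a b
  rw [← integral_zero_one_pow_mul_sub_one_pow, integral_interval_sub_left (hint 0 1) (hint 0 x)]

theorem abs_integral_pow_mul_sub_one_pow_le {x : ℝ} (hx : |x| ≤ 1) (i p : ℕ) :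
    |∫ t in (0 : ℝ)..x, t ^ i * (t - 1) ^ p| ≤ 2 ^ p * |x| ^ i := by
  have hbound : ∀ t ∈ Ι (0 : ℝ) x, ‖t ^ i * (t - 1) ^ p‖ ≤ 2 ^ p * |x| ^ i := fun t ht => by
    have htx : |t| ≤ |x| := by
      simpa using Set.abs_sub_left_of_mem_uIcc (Set.uIoc_subset_uIcc ht)
    have ht1 : |t - 1| ≤ 2 := (abs_sub _ _).trans (by norm_num; linarith)
    rw [Real.norm_eq_abs, abs_mul, abs_pow, abs_pow, mul_comm]
    gcongr
  calc |∫ t in (0 : ℝ)..x, t ^ i * (t - 1) ^ p| ≤ 2 ^ p * |x| ^ i * |x - 0| :=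
        norm_integral_le_of_norm_le_const hbound
    _ ≤ 2 ^ p * |x| ^ i := by
        rw [sub_zero]; exact mul_le_of_le_one_right (by positivity) hx

theorem isBigO_integral_pow_mul_sub_one_pow_sub {x : ℝ} (hx : |x| < 1) (p m : ℕ) :
    (fun i : ℕ => (∫ t in x..1, t ^ i * (t - 1) ^ p)
        - (-1) ^ p * p.factorial / ∏ k ∈ range (p + 1), ((i : ℝ) + k + 1))
      =O[atTop] fun i => ((i : ℝ) ^ m)⁻¹ := by
  refine IsBigO.trans ?_ (isBigO_pow_inv_pow_of_abs_lt_one m (abs_abs x ▸ hx))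
  refine IsBigO.of_bound (2 ^ p) (Eventually.of_forall fun i => ?_)
  rw [integral_pow_mul_sub_one_pow_eq, sub_sub_cancel_left, norm_neg, Real.norm_eq_abs,
    Real.norm_eq_abs, abs_pow, abs_abs]
  exact abs_integral_pow_mul_sub_one_pow_le hx.le i p

theorem stmt19 (p : ℕ) (x1 : ℝ) (hx1 : x1 ∈ Set.Ioo (-1:ℝ) 1) :
    ((fun i0 : ℕ => (∫ t in x1..1, t^i0 * (t-1)^p)
        - (-1)^p * (p.factorial : ℝ)/(i0:ℝ)^(1+p))
      =O[atTop] fun i0 : ℕ => (i0:ℝ)^(-(2+(p:ℝ)))) ∧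
    Filter.Tendsto (fun i0 : ℕ => (i0:ℝ)^(1+p) * ∫ t in x1..1, t^i0 * (t-1)^p)
      Filter.atTop (nhds ((-1)^p * (p.factorial : ℝ))) := by
  have hrpow : (fun i : ℕ => (i : ℝ) ^ (-(2 + (p : ℝ))))
      = fun i : ℕ => ((i : ℝ) ^ (1 + p + 1))⁻¹ := by
    ext i
    rw [Real.rpow_neg (Nat.cast_nonneg i), ← Real.rpow_natCast]
    push_cast
    ring_nf
  have hO : (fun i : ℕ => (∫ t in x1..1, t ^ i * (t - 1) ^ p)
      - (-1) ^ p * (p.factorial : ℝ) / (i : ℝ) ^ (1 + p))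
      =O[atTop] fun i : ℕ => ((i : ℝ) ^ (1 + p + 1))⁻¹ := by
    rw [add_comm 1 p]
    refine ((isBigO_integral_pow_mul_sub_one_pow_sub (abs_lt.2 hx1) p (p + 1 + 1)).add
      ((isBigO_inv_prod_sub_inv_pow (p + 1)).const_mul_left ((-1) ^ p * p.factorial))).congr_left
      fun i => ?_
    simp only [div_eq_mul_inv]
    ring
  exact ⟨hrpow ▸ hO, tendsto_pow_mul_of_isBigO_sub_div_pow (1 + p) hO⟩
end
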